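/- arXiv:1807.11505 — 2 statements merged into one kernel-verified Lean document; each statement's English description precedes it below -/
import Mathlib

section
/- In a self-modified ascent sequence, at each ascent the new value equals one more than the maximum of all preceding values: if a = (a_1,...,a_n) is an ascent sequence satisfying a_k ∈ [0, a_{k-1}] ∪ {1 + asc(a_1,...,a_{k-1})} for all k > 1, then a also satisfies a_k ∈ [0, a_{k-1}] ∪ {1 + max(a_1,...,a_{k-1})} for all k > 1, and conversely. -/
def ascents (l : List ℕ) : ℕ :=
  ((l.zip l.tail).filter (fun p => p.1 < p.2)).length

def IsAscSeq (l : List ℕ) : Prop :=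
  l.getD 0 0 = 0 ∧
  ∀ k, k < l.length → 0 < k → l.getD k 0 ≤ ascents (l.take k) + 1

def IsRGF (l : List ℕ) : Prop :=
  l.getD 0 0 = 0 ∧
  ∀ k, k < l.length → ∀ j, l.getD k 0 = j + 1 → ∃ i, i < k ∧ l.getD i 0 = j

def SelfModified (l : List ℕ) : Prop :=
  IsAscSeq l ∧
  ∀ k, k < l.length → 0 < k →
    l.getD k 0 ≤ l.getD (k - 1) 0 ∨ l.getD k 0 = ascents (l.take k) + 1

def Contains101 (l : List ℕ) : Prop :=
  ∃ i j k, i < j ∧ j < k ∧ k < l.length ∧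
    l.getD i 0 = l.getD k 0 ∧ l.getD j 0 < l.getD k 0

def Contains0101 (l : List ℕ) : Prop :=
  ∃ i j k m, i < j ∧ j < k ∧ k < m ∧ m < l.length ∧
    l.getD i 0 = l.getD k 0 ∧ l.getD j 0 = l.getD m 0 ∧ l.getD i 0 < l.getD j 0

def Contains1010 (l : List ℕ) : Prop :=
  ∃ i j k m, i < j ∧ j < k ∧ k < m ∧ m < l.length ∧
    l.getD i 0 = l.getD k 0 ∧ l.getD j 0 = l.getD m 0 ∧ l.getD j 0 < l.getD i 0

/-- The view of position `i` in the sequence `a`: the number of indices `j > i` such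
that `a j` strictly exceeds all entries `a k` for `i ≤ k < j`.  This agrees with the
recursive definition `v i = v j + 1` for `j` the least index `> i` with `a j > a i`. -/
def view {α : Type*} [LinearOrder α] [Inhabited α] (a : List α) (i : ℕ) : ℕ :=
  ((List.range a.length).filter (fun j =>
    decide (i < j ∧ ∀ k, k < j → i ≤ k → a.getD k default < a.getD j default))).length

/-- The panorama of `a`: the views of the positions of `a`, listed grouped by entry
value from largest value to smallest, positions within a group in increasing order. -/
def pan {α : Type*} [LinearOrder α] [Inhabited α] (a : List α) : List ℕ :=
  ((List.range a.length).mergeSort (fun i j =>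
    decide (a.getD j default < a.getD i default ∨
      (a.getD i default = a.getD j default ∧ i ≤ j)))).map (view a)

/-- A square matrix of natural numbers, given by a dimension and an entry function
(indices are 0-based; entries with an index `≥ d` are irrelevant/zero). -/
structure FMat where
  d : ℕ
  entry : ℕ → ℕ → ℕ

/-- 0-based index of the first row whose rightmost entry is nonzero. -/
noncomputable def mindex (M : FMat) : ℕ :=
  sInf {i | M.entry i (M.d - 1) ≠ 0}

/-- One step of the recursive bijection from ascent sequences to Fishburn matrices,
with cases AM1, AM2, AM3 (0-based indices). -/
noncomputable def fStep (M : FMat) (a : ℕ) : FMat :=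
  if a ≤ mindex M then
    -- AM1: increase entry (a, d-1)
    ⟨M.d, fun i j => M.entry i j + if i = a ∧ j = M.d - 1 then 1 else 0⟩
  else if a = M.d then
    -- AM2: append a new row and column, with 1 in the new diagonal entry
    ⟨M.d + 1, fun i j =>
      if i = M.d ∨ j = M.d then (if i = M.d ∧ j = M.d then 1 else 0)
      else M.entry i j⟩
  else
    -- AM3: insert a new row and column at index a
    ⟨M.d + 1, fun i j =>
      if i = a then (if j = M.d then 1 else 0)
      else if j = a then (if i < a then M.entry i (M.d - 1) else 0)
      else if j = M.d ∧ i < a then 0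
      else M.entry (if i < a then i else i - 1) (if j < a then j else j - 1)⟩

/-- The map from ascent sequences to Fishburn matrices. -/
noncomputable def fAM (l : List ℕ) : FMat :=
  l.tail.foldl fStep ⟨1, fun i j => if i = 0 ∧ j = 0 then 1 else 0⟩

/-- Fishburn matrix: upper triangular (and supported on `[0,d) × [0,d)`),
with no zero row and no zero column. -/
def IsFishburn (M : FMat) : Prop :=
  (∀ i j, (M.d ≤ i ∨ M.d ≤ j ∨ j < i) → M.entry i j = 0) ∧
  (∀ i, i < M.d → ∃ j, j < M.d ∧ M.entry i j ≠ 0) ∧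
  (∀ j, j < M.d → ∃ i, i < M.d ∧ M.entry i j ≠ 0)

def entrySum (M : FMat) : ℕ :=
  ∑ i ∈ Finset.range M.d, ∑ j ∈ Finset.range M.d, M.entry i j

/-- Reflection of a matrix through its antidiagonal. -/
def reflect (M : FMat) : FMat :=
  ⟨M.d, fun i j => if i < M.d ∧ j < M.d then M.entry (M.d - 1 - j) (M.d - 1 - i) else 0⟩

/-- The canonical sequence `(0^{m₀₀}, 1^{m₁₁}, 0^{m₀₁}, 2^{m₂₂}, 1^{m₁₂}, 0^{m₀₂}, …)`
(0-based indices) associated to a matrix; this is `f_MA(M)` for `M ∈ RMatrices`. -/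
def canonSeq (M : FMat) : List ℕ :=
  (List.range M.d).flatMap (fun j =>
    (List.range (j + 1)).reverse.flatMap (fun i => List.replicate (M.entry i j) i))

/-- The dual canonical sequence
`(0^{m_{d-1,d-1}}, 1^{m_{d-2,d-2}}, 0^{m_{d-2,d-1}}, …, (d-1)^{m_{0,0}}, …, 0^{m_{0,d-1}})`,
i.e. `f_MA` applied to the antidiagonal reflection of `M`. -/
def dualCanonSeq (M : FMat) : List ℕ :=
  (List.range M.d).flatMap (fun j =>
    (List.range (j + 1)).reverse.flatMap (fun i =>
      List.replicate (M.entry (M.d - 1 - j) (M.d - 1 - i)) i))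

/-- A matrix is SE-free if it has no pair of nonzero entries `m i j`, `m i' j'`
with `i < i'`, `j < j'` and `i' ≤ j`. -/
def SEFree (M : FMat) : Prop :=
  ¬ ∃ i j i' j', i < i' ∧ j < j' ∧ i' ≤ j ∧ j' < M.d ∧
    M.entry i j ≠ 0 ∧ M.entry i' j' ≠ 0

/-- Generalized ballot sequence (Yamanouchi word): in every prefix, each value `j+1`
occurs at most as often as `j`. -/
def IsBallot (l : List ℕ) : Prop :=
  ∀ k j, (l.take k).count (j + 1) ≤ (l.take k).count j

lemma ascents_cons_cons (a b : ℕ) (t : List ℕ) :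
    ascents (a :: b :: t) = (if a < b then 1 else 0) + ascents (b :: t) := by
  by_cases h : a < b <;> simp [ascents, List.zip, h] <;> omega

lemma le_foldr_max {a : ℕ} {l : List ℕ} (h : a ∈ l) : a ≤ l.foldr max 0 := by
  induction l with
  | nil => simp at h
  | cons x t ih =>
    rcases List.mem_cons.1 h with rfl | h
    · simp
    · exact le_trans (ih h) (le_max_right _ _)

lemma foldr_max_snoc (p : List ℕ) (y : ℕ) :
    (p ++ [y]).foldr max 0 = max (p.foldr max 0) y := by
  induction p with
  | nil => simp
  | cons x t ih => simp [ih, max_assoc, max_comm y 0]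

lemma ascents_snoc (p : List ℕ) (hp : p ≠ []) (y : ℕ) :
    ascents (p ++ [y]) = ascents p + if p.getD (p.length - 1) 0 < y then 1 else 0 := by
  induction p with
  | nil => simp at hp
  | cons x t ih =>
    cases t with
    | nil => by_cases h : x < y <;> simp [ascents, List.zip, h] <;> omega
    | cons b t' =>
      rw [show (x :: b :: t') ++ [y] = x :: ((b :: t') ++ [y]) by simp,
        show (b :: t') ++ [y] = b :: (t' ++ [y]) by simp,
        ascents_cons_cons, ← show (b :: t') ++ [y] = b :: (t' ++ [y]) by simp,
        ih (by simp), ascents_cons_cons]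
      simp [List.getD]
      omega

lemma getD_take_eq (l : List ℕ) (i k : ℕ) (hik : i < k) (hk : k ≤ l.length) :
    (l.take k).getD i 0 = l.getD i 0 := by
  have hi : i < l.length := lt_of_lt_of_le hik hk
  have hi' : i < (l.take k).length := by simp; omega
  rw [List.getD_eq_getElem _ _ hi', List.getD_eq_getElem _ _ hi, List.getElem_take]

lemma key (l : List ℕ) (h : IsAscSeq l)
    (hc : ∀ k, k < l.length → 0 < k →
      l.getD k 0 ≤ l.getD (k - 1) 0 ∨ l.getD k 0 = ascents (l.take k) + 1 ∨
        l.getD k 0 = (l.take k).foldr max 0 + 1) :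
    ∀ k, k ≤ l.length → 0 < k → ascents (l.take k) = (l.take k).foldr max 0 := by
  intro k
  induction k with
  | zero => omega
  | succ n ih =>
    intro hk _
    rcases Nat.eq_zero_or_pos n with rfl | hn
    · have h0 : l.take 1 = [0] := by
        cases l with
        | nil => simp at hk
        | cons a t =>
          have := h.1
          simp at this
          simp [this]
      rw [h0]; simp [ascents]
    · have hn' : n < l.length := hk
      set p := l.take n with hp
      have hplen : p.length = n := by simp [hp]; omega
      have hpne : p ≠ [] := by
        intro hnil; rw [hnil] at hplen; simp at hplen; omega
      have hpfx : l.take (n+1) = p ++ [l.getD n 0] := by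
        rw [List.take_succ]
        congr
        simp [List.getElem?_eq_getElem hn', List.getD_eq_getElem _ _ hn']
      have hxp : p.getD (n-1) 0 = l.getD (n-1) 0 :=
        getD_take_eq l (n-1) n (by omega) (le_of_lt hn')
      have hxmem : p.getD (n-1) 0 ∈ p := by
        rw [List.getD_eq_getElem _ _ (by omega : n - 1 < p.length)]
        exact List.getElem_mem _
      have hxM : l.getD (n-1) 0 ≤ p.foldr max 0 := hxp ▸ le_foldr_max hxmem
      have hEq : ascents p = p.foldr max 0 := ih (le_of_lt hn') hn
      rw [hpfx, ascents_snoc p hpne, foldr_max_snoc, hplen, hxp, hEq]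
      rcases hc n hn' hn with h1 | h2 | h3
      · split_ifs <;> omega
      · rw [hEq] at h2; split_ifs <;> omega
      · rw [← hp] at h3; split_ifs <;> omega

theorem selfModified_iff_max (l : List ℕ) (h : IsAscSeq l) :
    (∀ k, k < l.length → 0 < k →
      l.getD k 0 ≤ l.getD (k - 1) 0 ∨ l.getD k 0 = ascents (l.take k) + 1) ↔
    (∀ k, k < l.length → 0 < k →
      l.getD k 0 ≤ l.getD (k - 1) 0 ∨ l.getD k 0 = (l.take k).foldr max 0 + 1) := by
  constructor
  · intro hyp k hk hk0
    have hkey := key l h (fun k hk hk0 => by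
      rcases hyp k hk hk0 with h1 | h2
      · exact Or.inl h1
      · exact Or.inr (Or.inl h2))
    rcases hyp k hk hk0 with h1 | h2
    · exact Or.inl h1
    · exact Or.inr (by rw [← hkey k (le_of_lt hk) hk0]; exact h2)
  · intro hyp k hk hk0
    have hkey := key l h (fun k hk hk0 => by
      rcases hyp k hk hk0 with h1 | h2
      · exact Or.inl h1
      · exact Or.inr (Or.inr h2))
    rcases hyp k hk hk0 with h1 | h2
    · exact Or.inl h1
    · exact Or.inr (by rw [hkey k (le_of_lt hk) hk0]; exact h2)
end

section
/- A sequence of non-negative integers is a 101-avoiding ascent sequence if and only if it is a restricted growth function avoiding both patterns 0101 and 1010. -/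
/-
In a 101-avoiding ascent sequence every ascent climbs to a new maximum: an ascent to a value
already seen would close a 101 with its earlier occurrence, provided every value below the
running maximum has occurred, which holds inductively. Hence the number of ascents is at most
the running maximum, and the ascent bound becomes the restricted growth bound
a_{k+1} ≤ max(a_0, …, a_k) + 1. Conversely, in a restricted growth function the running maximum
only increases by one, and only at an ascent, so it is bounded by the ascent count; and an occurrence
a_i = a_k > a_j of 101 extends to a 0101 by an earlier occurrence of a_j, which exists because
every value below a_i appears before i. Both 0101 and 1010 contain 101.
-/

def prefixMax (f : ℕ → ℕ) (k : ℕ) : ℕ :=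
  (Finset.range (k + 1)).sup f

def ascCount (f : ℕ → ℕ) (n : ℕ) : ℕ :=
  (List.range n).countP fun i => f i < f (i + 1)

def Avoids101 (f : ℕ → ℕ) : Prop :=
  ∀ i j k, i < j → j < k → f i = f k → f k ≤ f j

section Sequences

variable {f : ℕ → ℕ}

theorem prefixMax_zero : prefixMax f 0 = f 0 := by
  simp [prefixMax]

theorem prefixMax_succ (k : ℕ) : prefixMax f (k + 1) = max (f (k + 1)) (prefixMax f k) := by
  rw [prefixMax, Finset.range_add_one, Finset.sup_insert]
  rfl

theorem le_prefixMax {i k : ℕ} (h : i ≤ k) : f i ≤ prefixMax f k :=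
  Finset.le_sup (Finset.mem_range.mpr (Nat.lt_succ_of_le h))

theorem ascCount_succ (n : ℕ) :
    ascCount f (n + 1) = ascCount f n + if f n < f (n + 1) then 1 else 0 := by
  simp [ascCount, List.range_succ, List.countP_append]

theorem ascCount_congr {g : ℕ → ℕ} {n : ℕ} (h : ∀ i ≤ n, f i = g i) :
    ascCount f n = ascCount g n :=
  List.countP_congr fun i hi => by
    rw [List.mem_range] at hi
    rw [h i hi.le, h (i + 1) hi]

theorem exists_eq_of_le_prefixMax (h0 : f 0 = 0) {n : ℕ}
    (hg : ∀ k < n, f (k + 1) ≤ prefixMax f k + 1) {v : ℕ} (hv : v ≤ prefixMax f n) :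
    ∃ i ≤ n, f i = v := by
  induction n generalizing v with
  | zero => exact ⟨0, le_rfl, by rw [prefixMax_zero, h0] at hv; omega⟩
  | succ n ih =>
    rw [prefixMax_succ] at hv
    by_cases hvn : v ≤ prefixMax f n
    · obtain ⟨i, hi, rfl⟩ := ih (fun k hk => hg k (by omega)) hvn
      exact ⟨i, by omega, rfl⟩
    · have := hg n n.lt_succ_self
      exact ⟨n + 1, le_rfl, by omega⟩

theorem prefixMax_le_ascCount (h0 : f 0 = 0) {n : ℕ}
    (hg : ∀ k < n, f (k + 1) ≤ prefixMax f k + 1) : prefixMax f n ≤ ascCount f n := by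
  induction n with
  | zero => simp [prefixMax_zero, h0]
  | succ n ih =>
    have ih := ih fun k hk => hg k (by omega)
    have hfn : f n ≤ prefixMax f n := le_prefixMax le_rfl
    have := hg n n.lt_succ_self
    rw [prefixMax_succ, ascCount_succ]
    split_ifs <;> omega

theorem ascCount_le_prefixMax {n : ℕ}
    (h : ∀ k < n, f k < f (k + 1) → prefixMax f k < f (k + 1)) : ascCount f n ≤ prefixMax f n := by
  induction n with
  | zero => exact Nat.zero_le _
  | succ n ih =>
    have ih := ih fun k hk => h k (by omega)
    rw [prefixMax_succ, ascCount_succ]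
    split_ifs with hasc
    · have := h n n.lt_succ_self hasc
      omega
    · omega

theorem Avoids101.prefixMax_lt_of_lt (hf : Avoids101 f) {k : ℕ}
    (hclosed : ∀ v ≤ prefixMax f k, ∃ i ≤ k, f i = v) (hasc : f k < f (k + 1)) :
    prefixMax f k < f (k + 1) := by
  by_contra! hle
  obtain ⟨i, hik, hi⟩ := hclosed _ hle
  have hik : i < k := lt_of_le_of_ne hik fun h => by subst h; omega
  have := hf i k (k + 1) hik k.lt_succ_self hi
  omega

theorem Avoids101.succ_le_prefixMax (h0 : f 0 = 0) (hasc : ∀ k, f (k + 1) ≤ ascCount f k + 1)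
    (hf : Avoids101 f) (k : ℕ) : f (k + 1) ≤ prefixMax f k + 1 := by
  induction k using Nat.strong_induction_on with
  | _ k ih =>
    have hrec : ∀ m < k, f m < f (m + 1) → prefixMax f m < f (m + 1) := fun m hm =>
      hf.prefixMax_lt_of_lt fun _ hv =>
        exists_eq_of_le_prefixMax h0 (fun j hj => ih j (by omega)) hv
    exact (hasc k).trans (Nat.add_le_add_right (ascCount_le_prefixMax hrec) 1)

theorem exists_lt_eq_of_succ_le_prefixMax (h0 : f 0 = 0)
    (hg : ∀ k, f (k + 1) ≤ prefixMax f k + 1) {k j : ℕ} (hk : f k = j + 1) :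
    ∃ i < k, f i = j := by
  obtain _ | k := k
  · omega
  obtain ⟨i, hi, rfl⟩ := exists_eq_of_le_prefixMax h0 (fun m _ => hg m)
    (show j ≤ prefixMax f k by have := hg k; omega)
  exact ⟨i, by omega, rfl⟩

theorem succ_le_prefixMax_of_exists_lt_eq (h : ∀ k j, f k = j + 1 → ∃ i < k, f i = j) (k : ℕ) :
    f (k + 1) ≤ prefixMax f k + 1 := by
  cases hfk : f (k + 1) with
  | zero => exact Nat.zero_le _
  | succ j =>
    obtain ⟨i, hi, rfl⟩ := h (k + 1) j hfk
    exact Nat.add_le_add_right (le_prefixMax (by omega)) 1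

end Sequences

theorem lt_length_of_getD_ne_zero {l : List ℕ} {k : ℕ} (h : l.getD k 0 ≠ 0) : k < l.length := by
  by_contra! hk
  exact h (List.getD_eq_default _ _ hk)

theorem ascents_eq_ascCount (l : List ℕ) : ascents l = ascCount (l.getD · 0) (l.length - 1) := by
  have hzip : l.zip l.tail = (List.range (l.length - 1)).map fun i => (l.getD i 0, l.getD (i + 1) 0) := by
    apply List.ext_getElem (by simp)
    intro i _ h
    rw [List.length_map, List.length_range] at h
    simp [show i < l.length by omega, show i + 1 < l.length by omega]
  rw [ascents, ← List.countP_eq_length_filter, hzip, List.countP_map]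
  rfl

theorem ascents_take_succ {l : List ℕ} {k : ℕ} (hk : k < l.length) :
    ascents (l.take (k + 1)) = ascCount (l.getD · 0) k := by
  rw [ascents_eq_ascCount, List.length_take, show min (k + 1) l.length - 1 = k by omega]
  exact ascCount_congr fun i hi => by
    simp [List.getD_eq_getElem?_getD, show i < k + 1 by omega]

theorem isAscSeq_iff (l : List ℕ) :
    IsAscSeq l ↔ l.getD 0 0 = 0 ∧ ∀ k, l.getD (k + 1) 0 ≤ ascCount (l.getD · 0) k + 1 := by
  refine and_congr_right fun _ => ⟨fun h k => ?_, fun h k hk hk0 => ?_⟩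
  · by_cases hk : k + 1 < l.length
    · simpa [ascents_take_succ (by omega : k < l.length)] using h (k + 1) hk k.succ_pos
    · rw [List.getD_eq_default _ _ (not_lt.mp hk)]
      exact Nat.zero_le _
  · obtain ⟨k, rfl⟩ := Nat.exists_eq_add_of_lt hk0
    simpa [ascents_take_succ (by omega : k < l.length)] using h k

theorem isRGF_iff (l : List ℕ) :
    IsRGF l ↔ l.getD 0 0 = 0 ∧ ∀ k j, l.getD k 0 = j + 1 → ∃ i < k, l.getD i 0 = j :=
  and_congr_right fun _ =>
    ⟨fun h k j hj => h k (lt_length_of_getD_ne_zero (by omega)) j hj, fun h k _ => h k⟩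

theorem not_contains101_iff (l : List ℕ) : ¬ Contains101 l ↔ Avoids101 (l.getD · 0) := by
  simp only [Contains101, Avoids101, not_exists, not_and, not_lt]
  refine ⟨fun h i j k hij hjk heq => ?_, fun h i j k hij hjk _ => h i j k hij hjk⟩
  by_contra! hlt
  exact (h i j k hij hjk (lt_length_of_getD_ne_zero (by omega)) heq).not_gt hlt

theorem Contains0101.contains101 {l : List ℕ} (h : Contains0101 l) : Contains101 l := by
  obtain ⟨_, j, k, m, -, hjk, hkm, hm, hik, hjm, hlt⟩ := h
  exact ⟨j, k, m, hjk, hkm, hm, hjm, by omega⟩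

theorem Contains1010.contains101 {l : List ℕ} (h : Contains1010 l) : Contains101 l := by
  obtain ⟨i, j, k, m, hij, hjk, hkm, hm, hik, -, hji⟩ := h
  exact ⟨i, j, k, hij, hjk, by omega, hik, by omega⟩

theorem avoids101_of_not_contains0101 {l : List ℕ} (h0 : l.getD 0 0 = 0)
    (hg : ∀ k, l.getD (k + 1) 0 ≤ prefixMax (l.getD · 0) k + 1) (h : ¬ Contains0101 l) :
    Avoids101 (l.getD · 0) := by
  intro i j k hij hjk hik
  by_contra! hlt
  simp only at hik hlt
  have hji : l.getD j 0 ≤ prefixMax (l.getD · 0) i := by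
    have := le_prefixMax (f := (l.getD · 0)) (le_refl i)
    omega
  obtain ⟨p, hpi, hp⟩ := exists_eq_of_le_prefixMax (f := (l.getD · 0)) h0 (fun m _ => hg m) hji
  have hpi : p < i := lt_of_le_of_ne hpi (by rintro rfl; omega)
  exact h ⟨p, i, j, k, hpi, hij, hjk, lt_length_of_getD_ne_zero (by omega), hp, hik, by omega⟩

theorem casc_characterization (l : List ℕ) :
    (IsAscSeq l ∧ ¬ Contains101 l) ↔
    (IsRGF l ∧ ¬ Contains0101 l ∧ ¬ Contains1010 l) := by
  rw [isAscSeq_iff, isRGF_iff]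
  constructor
  · rintro ⟨⟨h0, hasc⟩, h101⟩
    have hg := ((not_contains101_iff l).mp h101).succ_le_prefixMax (f := (l.getD · 0)) h0 hasc
    exact ⟨⟨h0, fun _ _ => exists_lt_eq_of_succ_le_prefixMax (f := (l.getD · 0)) h0 hg⟩,
      fun h => h101 h.contains101, fun h => h101 h.contains101⟩
  · rintro ⟨⟨h0, hrgf⟩, h0101, -⟩
    have hg := succ_le_prefixMax_of_exists_lt_eq (f := (l.getD · 0)) hrgf
    refine ⟨⟨h0, fun k => (hg k).trans ?_⟩, (not_contains101_iff l).mpr ?_⟩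
    · exact Nat.add_le_add_right (prefixMax_le_ascCount (f := (l.getD · 0)) h0 fun m _ => hg m) 1
    · exact avoids101_of_not_contains0101 h0 hg h0101
end
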